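/- arXiv:2001.04949 — 4 statements merged into one kernel-verified Lean document; each statement's English description precedes it below -/
import Mathlib

section
/- Let a > 0, b ∈ ℝ with −b ≥ 2a, and s = σ + iω ∈ ℂ with σ ≥ 0. Then the two roots λ₁ = ((s − b) + √((b − s)² − 4a²))/(2a) and λ₂ = ((s − b) − √((b − s)² − 4a²))/(2a) of the characteristic equation a y² + (b − s) y + a = 0 (where √ denotes the principal branch of the complex square root) satisfy |λ₂| ≤ 1 ≤ |λ₁|. -/
/-!
With `u = s - b` and `w` the principal square root of `u² - 4a²`, the two roots are
`(u ∓ w) / (2a)` and their product is `1`, so it suffices to show `‖u - w‖ ≤ ‖u + w‖`, i.e.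
`Re (u w̄) ≥ 0`. Here `Re u ≥ 2a > 0` and `Re w ≥ 0`, while `Im (w²) = Im (u²)` reads
`Re w · Im w = Re u · Im u`, which forces `Im u` and `Im w` to have the same sign.
-/

open Complex

theorem norm_sub_le_norm_add_of_inner_nonneg {F : Type*} [NormedAddCommGroup F]
    [InnerProductSpace ℝ F] {x y : F} (h : 0 ≤ inner ℝ x y) : ‖x - y‖ ≤ ‖x + y‖ := by
  refine (pow_le_pow_iff_left₀ (norm_nonneg _) (norm_nonneg _) two_ne_zero).mp ?_
  rw [norm_sub_sq_real, norm_add_sq_real]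
  linarith

theorem norm_le_one_and_one_le_norm_of_mul_eq_one {α : Type*} [SeminormedRing α]
    [NormOneClass α] [NormMulClass α] {p q : α} (hpq : p * q = 1) (h : ‖p‖ ≤ ‖q‖) :
    ‖p‖ ≤ 1 ∧ 1 ≤ ‖q‖ := by
  have hnorm : ‖p‖ * ‖q‖ = 1 := by rw [← norm_mul, hpq, norm_one]
  have hp := norm_nonneg p
  constructor <;> nlinarith

theorem reciprocal_quadratic_roots_mul_eq_one {K : Type*} [Field K] [NeZero (2 : K)]
    {a u w : K} (ha : a ≠ 0) (hw : w ^ 2 = u ^ 2 - 4 * a ^ 2) :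
    (u - w) / (2 * a) * ((u + w) / (2 * a)) = 1 := by
  field_simp
  linear_combination -hw

namespace Complex

theorem re_cpow_one_half_nonneg (z : ℂ) : 0 ≤ (z ^ ((1 : ℂ) / 2)).re := by
  rw [one_div, cpow_inv_two_re]
  exact Real.sqrt_nonneg _

theorem cpow_one_half_sq (z : ℂ) : (z ^ ((1 : ℂ) / 2)) ^ 2 = z := by
  rw [one_div]
  exact_mod_cast cpow_ofNat_inv_pow z 2

theorem inner_nonneg_of_im_sq_eq {u w : ℂ} (hu : 0 < u.re) (hw : 0 ≤ w.re)
    (h : (w ^ 2).im = (u ^ 2).im) : 0 ≤ inner ℝ u w := by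
  have hinner : inner ℝ u w = u.re * w.re + u.im * w.im := by
    rw [Complex.inner, mul_re, conj_re, conj_im]
    ring
  rw [hinner]
  simp only [sq, mul_im] at h
  have hkey : w.re * w.im = u.re * u.im := by linarith
  rcases hw.eq_or_lt with hw0 | hw_pos
  · have him : u.im = 0 := by
      rw [← hw0, zero_mul] at hkey
      exact (mul_eq_zero.mp hkey.symm).resolve_left hu.ne'
    simp [him, ← hw0]
  · have hprod : 0 ≤ w.re * u.re * (u.im * w.im) := by
      calc 0 ≤ (u.re * u.im) ^ 2 := sq_nonneg _
        _ = w.re * u.re * (u.im * w.im) := by linear_combination (-(u.re * u.im)) * hkey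
    exact add_nonneg (mul_nonneg hu.le hw)
      ((mul_nonneg_iff_of_pos_left (mul_pos hw_pos hu)).mp hprod)

end Complex

/-- For `a > 0`, `-b ≥ 2a` and `Re s ≥ 0`, the roots
`λ₁ = ((s - b) + √((b - s)² - 4a²))/(2a)` and `λ₂ = ((s - b) - √((b - s)² - 4a²))/(2a)`
of the characteristic equation `a y² + (b - s) y + a = 0` (principal complex square root)
satisfy `|λ₂| ≤ 1 ≤ |λ₁|`. -/
theorem wr_characteristic_roots_modulus (a b : ℝ) (ha : 0 < a) (hb : 2 * a ≤ -b)
    (s : ℂ) (hs : 0 ≤ s.re) :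
    ‖(((s - (b : ℂ)) - (((b : ℂ) - s) ^ 2 - 4 * (a : ℂ) ^ 2) ^ ((1 : ℂ) / 2)) /
        (2 * (a : ℂ)))‖ ≤ 1 ∧
    1 ≤ ‖(((s - (b : ℂ)) + (((b : ℂ) - s) ^ 2 - 4 * (a : ℂ) ^ 2) ^ ((1 : ℂ) / 2)) /
        (2 * (a : ℂ)))‖ := by
  set w := (((b : ℂ) - s) ^ 2 - 4 * (a : ℂ) ^ 2) ^ ((1 : ℂ) / 2)
  have hw : w ^ 2 = (s - b) ^ 2 - 4 * (a : ℂ) ^ 2 := by rw [cpow_one_half_sq]; ring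
  have hu : 0 < (s - b).re := by rw [sub_re, ofReal_re]; linarith
  have him : (w ^ 2).im = ((s - b) ^ 2).im := by
    rw [hw, sub_im, sub_eq_self]
    norm_cast
  have hnorm : ‖s - b - w‖ ≤ ‖s - b + w‖ := norm_sub_le_norm_add_of_inner_nonneg
    (inner_nonneg_of_im_sq_eq hu (re_cpow_one_half_nonneg _) him)
  refine norm_le_one_and_one_le_norm_of_mul_eq_one
    (reciprocal_quadratic_roots_mul_eq_one (ofReal_ne_zero.mpr ha.ne') hw) ?_
  rw [norm_div, norm_div]
  gcongr
end

section
/- Let a > 0, ε > 0, b = −(2 + ε)a, and s = σ + iω ∈ ℂ with σ ≥ 0. Then |λ₁(s)| > 1, and consequently the convergence factor of the classical waveform relaxation algorithm with overlap n satisfies |ρ_{n,cla}(s)| = |1/λ₁(s)²|^{n+1} < 1 for every n ∈ ℕ. -/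
/- The principal square root has nonnegative real part, so `Re λ₁(s) ≥ (Re s - b)/(2a)`.
With `b = -(2 + ε)a` and `Re s ≥ 0` this exceeds `1`, hence `|λ₁(s)| ≥ Re λ₁(s) > 1`
and `|1/λ₁(s)²| < 1`. -/

/-- The root `λ₁(s) = ((s - b) + √((b - s)² - 4a²))/(2a)` of the characteristic equation,
with the principal branch of the complex square root. -/
noncomputable def lam1 (a b : ℝ) (s : ℂ) : ℂ :=
  ((s - (b : ℂ)) + (((b : ℂ) - s) ^ 2 - 4 * (a : ℂ) ^ 2) ^ ((1 : ℂ) / 2)) / (2 * (a : ℂ))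

lemma Complex.re_cpow_one_half_nonneg_s1 (z : ℂ) : 0 ≤ (z ^ ((1 : ℂ) / 2)).re := by
  rw [one_div, Complex.cpow_inv_two_re]
  exact Real.sqrt_nonneg _

lemma div_le_re_lam1 {a : ℝ} (ha : 0 < a) (b : ℝ) (s : ℂ) :
    (s.re - b) / (2 * a) ≤ (lam1 a b s).re := by
  have hsqrt := Complex.re_cpow_one_half_nonneg_s1 (((b : ℂ) - s) ^ 2 - 4 * (a : ℂ) ^ 2)
  rw [lam1, show (2 * (a : ℂ)) = ((2 * a : ℝ) : ℂ) by push_cast; ring, Complex.div_ofReal_re]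
  gcongr
  simpa using hsqrt

lemma one_lt_norm_lam1 {a b : ℝ} (ha : 0 < a) {s : ℂ} (hs : b + 2 * a < s.re) :
    1 < ‖lam1 a b s‖ :=
  calc 1 < (s.re - b) / (2 * a) := by rw [one_lt_div (by positivity)]; linarith
    _ ≤ (lam1 a b s).re := div_le_re_lam1 ha b s
    _ ≤ ‖lam1 a b s‖ := Complex.re_le_norm _

lemma norm_one_div_sq_pow_succ_lt_one {𝕜 : Type*} [NormedDivisionRing 𝕜] {z : 𝕜}
    (hz : 1 < ‖z‖) (n : ℕ) : ‖(1 / z ^ 2) ^ (n + 1)‖ < 1 := by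
  rw [norm_pow, norm_div, norm_one, norm_pow]
  have hz2 : 1 < ‖z‖ ^ 2 := one_lt_pow₀ hz two_ne_zero
  exact pow_lt_one₀ (by positivity) ((div_lt_one (by positivity)).2 hz2) n.succ_ne_zero

/-- For `a > 0`, `ε > 0`, `b = -(2 + ε)a` and `Re s ≥ 0` one has `|λ₁(s)| > 1`, and hence the
convergence factor of classical WR with overlap `n`, `ρ_{n,cla}(s) = (1/λ₁(s)²)^{n+1}`,
satisfies `|ρ_{n,cla}(s)| < 1` for all `n ∈ ℕ`. -/
theorem classical_wr_convergence_factor_lt_one (a ε : ℝ) (ha : 0 < a) (hε : 0 < ε)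
    (s : ℂ) (hs : 0 ≤ s.re) :
    1 < ‖lam1 a (-(2 + ε) * a) s‖ ∧
    ∀ n : ℕ, ‖(1 / (lam1 a (-(2 + ε) * a) s) ^ 2) ^ (n + 1)‖ < 1 := by
  have hlam : 1 < ‖lam1 a (-(2 + ε) * a) s‖ := one_lt_norm_lam1 ha (by nlinarith)
  exact ⟨hlam, norm_one_div_sq_pow_succ_lt_one hlam⟩
end

section
/- Let a > 0 and for ε > 0 set b = −(2 + ε)a and α*₀(ε) = √2 ε^{1/4}. Then as ε → 0⁺, the non-overlapping OWR convergence factor with β = −α*₀ equi-oscillates asymptotically between ω = 0 and ω = ∞ at the value 1 − 2√2 ε^{1/4}: namely |ρ₀(0, α*₀(ε), −α*₀(ε))| = 1 − 2√2 ε^{1/4} + O(ε^{1/2}) and lim_{ω → +∞} |ρ₀(iω, α*₀(ε), −α*₀(ε))| = 1/(1 + √2 ε^{1/4})² = 1 − 2√2 ε^{1/4} + O(ε^{1/2}). -/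
/-- The non-overlapping OWR convergence factor with `β = -α`:
`ρ₀(s, α, -α) = ((α+1-λ₁(s))/((1+α)λ₁(s)-1))²`. -/
noncomputable def rho0 (a b : ℝ) (s : ℂ) (α : ℝ) : ℂ :=
  (((α : ℂ) + 1 - lam1 a b s) / ((1 + (α : ℂ)) * lam1 a b s - 1)) ^ 2

/-- `λ₁(0) = (2 + ε + √(4ε + ε²))/2`, the real root greater than 1 of
`a y² + b y + a = 0` with `b = -(2 + ε)a`. -/
noncomputable def lam1Zero (ε : ℝ) : ℝ :=
  (2 + ε + Real.sqrt (4 * ε + ε ^ 2)) / 2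

/-! At `s = 0` everything is real. With `t = α*₀ = √2 ε^{1/4}` one has `t²/2 = √ε` and
`λ₁(0) = 1 + √ε + O(ε) = 1 + t²/2 + O(t⁴)`; for such `λ` the square of
`(t + 1 - λ)/((1 + t)λ - 1)` is `1 - 2t + O(t²)`, i.e. `1 - 2√2 ε^{1/4} + O(ε^{1/2})`.

On the imaginary axis, `b < 0` puts `(b - iω)² - 4a²` in the upper half plane, where the principal
square root has nonnegative imaginary part, so `Im λ₁(iω) ≥ ω/(2a)` and `λ₁(iω) → ∞`. The map
`z ↦ ((c - z)/(cz - 1))²` tends to `1/c²` at infinity, which gives the limit `1/(1 + α)²`. -/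

lemma abs_sq_ratio_sub_one_sub_two_mul_le {t l : ℝ} (ht : 0 < t) (ht1 : t ≤ 1)
    (hl : t ^ 2 / 2 ≤ l - 1) (hl' : l - 1 ≤ t ^ 2 / 2 + t ^ 4) :
    |((t + 1 - l) / ((1 + t) * l - 1)) ^ 2 - (1 - 2 * t)| ≤ 25 * t ^ 2 := by
  obtain ⟨m, rfl⟩ : ∃ m, l = 1 + m := ⟨l - 1, by ring⟩
  have ht2 : t ^ 2 ≤ 1 := pow_le_one₀ ht.le ht1
  have hm : t ^ 2 / 2 ≤ m := by linarith
  have hm' : m ≤ 3 / 2 * t ^ 2 := by nlinarith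
  set D := (1 + t) * (1 + m) - 1
  have hDt : t ≤ D := by nlinarith
  -- the terms of order `t³` cancel because `m ≈ t²/2`
  have hnum : (t + 1 - (1 + m)) ^ 2 - D ^ 2 * (1 - 2 * t)
      = -(4 * t * (m - t ^ 2 / 2)) + 2 * t ^ 2 * m * (1 + 2 * t) + t ^ 2 * m ^ 2 * (3 + 2 * t) := by
    ring
  have h₁ : 4 * t * (m - t ^ 2 / 2) ≤ 4 * t ^ 4 := by nlinarith
  have h₂ : 2 * t ^ 2 * m * (1 + 2 * t) ≤ 9 * t ^ 4 := by nlinarith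
  have h₃ : t ^ 2 * m ^ 2 * (3 + 2 * t) ≤ 12 * t ^ 4 := by
    have : m ^ 2 ≤ 9 / 4 * t ^ 4 := by nlinarith
    nlinarith
  have hnum_le : |(t + 1 - (1 + m)) ^ 2 - D ^ 2 * (1 - 2 * t)| ≤ 25 * t ^ 4 := by
    rw [hnum, abs_le]
    constructor <;> nlinarith
  have hD2 : 0 < D ^ 2 := pow_pos (ht.trans_le hDt) 2
  rw [div_pow, div_sub' hD2.ne', abs_div, abs_of_pos hD2, div_le_iff₀ hD2]
  calc _ ≤ 25 * t ^ 4 := hnum_le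
    _ = 25 * t ^ 2 * t ^ 2 := by ring
    _ ≤ 25 * t ^ 2 * D ^ 2 := by gcongr

lemma abs_one_div_one_add_sq_sub_le {t : ℝ} (ht : 0 ≤ t) :
    |1 / (1 + t) ^ 2 - (1 - 2 * t)| ≤ 3 * t ^ 2 := by
  have h : 1 / (1 + t) ^ 2 - (1 - 2 * t) = t ^ 2 * (3 + 2 * t) / (1 + t) ^ 2 := by
    field_simp; ring
  rw [h, abs_of_nonneg (by positivity), div_le_iff₀ (by positivity)]
  nlinarith [pow_nonneg ht 3, pow_nonneg ht 4]

lemma lam1Zero_sub_one_mem {ε : ℝ} (hε : 0 ≤ ε) :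
    √ε ≤ lam1Zero ε - 1 ∧ lam1Zero ε - 1 ≤ √ε + ε := by
  have hlow : 2 * √ε ≤ √(4 * ε + ε ^ 2) := by
    rw [show 2 * √ε = √(4 * ε) by rw [Real.sqrt_mul' _ hε]; norm_num]
    exact Real.sqrt_le_sqrt (by nlinarith)
  have hupp : √(4 * ε + ε ^ 2) ≤ 2 * √ε + ε := by
    rw [Real.sqrt_le_left (by positivity)]
    nlinarith [Real.sq_sqrt hε, Real.sqrt_nonneg ε]
  constructor <;> (rw [lam1Zero]; linarith)

lemma sq_sqrt_two_mul_rpow_quarter {ε : ℝ} (hε : 0 ≤ ε) :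
    (√2 * ε ^ ((1 : ℝ) / 4)) ^ 2 = 2 * √ε := by
  rw [mul_pow, Real.sq_sqrt zero_le_two, ← Real.rpow_natCast, ← Real.rpow_mul hε,
    Real.sqrt_eq_rpow]
  norm_num

lemma abs_sq_ratio_lam1Zero_sub_le {ε : ℝ} (hε : 0 < ε) (hε1 : ε ≤ 1 / 4) :
    |((√2 * ε ^ ((1 : ℝ) / 4) + 1 - lam1Zero ε) /
        ((1 + √2 * ε ^ ((1 : ℝ) / 4)) * lam1Zero ε - 1)) ^ 2
      - (1 - 2 * √2 * ε ^ ((1 : ℝ) / 4))| ≤ 50 * ε ^ ((1 : ℝ) / 2) := by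
  rw [mul_assoc 2, ← Real.sqrt_eq_rpow]
  set t := √2 * ε ^ ((1 : ℝ) / 4)
  have ht : 0 < t := by positivity
  have ht2 : t ^ 2 = 2 * √ε := sq_sqrt_two_mul_rpow_quarter hε.le
  have ht4 : t ^ 4 = 4 * ε := by
    rw [show t ^ 4 = (t ^ 2) ^ 2 by ring, ht2, mul_pow, Real.sq_sqrt hε.le]
    norm_num
  have ht1 : t ≤ 1 := (pow_le_one_iff_of_nonneg ht.le (by norm_num : 4 ≠ 0)).1 (by linarith)
  obtain ⟨hl, hl'⟩ := lam1Zero_sub_one_mem hε.le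
  have := abs_sq_ratio_sub_one_sub_two_mul_le (l := lam1Zero ε) ht ht1 (by linarith) (by linarith)
  linarith

open Complex Filter Topology Bornology

lemma lam1_im_ge {a b : ℝ} (ha : 0 < a) (hb : b ≤ 0) {ω : ℝ} (hω : 0 ≤ ω) :
    ω / (2 * a) ≤ (lam1 a b (I * ω)).im := by
  have hsqrt : 0 ≤ ((((b : ℂ) - I * ω) ^ 2 - 4 * (a : ℂ) ^ 2) ^ ((1 : ℂ) / 2)).im := by
    rw [one_div, cpow_inv_two_im_eq_sqrt]
    · exact Real.sqrt_nonneg _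
    · simp only [sq, sub_im, mul_im, sub_re, mul_re, ofReal_re, ofReal_im, I_re, I_im, re_ofNat,
        im_ofNat]
      nlinarith
  rw [lam1, show (2 * (a : ℂ)) = ((2 * a : ℝ) : ℂ) by push_cast; ring, div_ofReal_im]
  gcongr
  simpa using hsqrt

lemma tendsto_lam1_cobounded {a b : ℝ} (ha : 0 < a) (hb : b ≤ 0) :
    Tendsto (fun ω : ℝ => lam1 a b (I * ω)) atTop (cobounded ℂ) := by
  rw [← tendsto_norm_atTop_iff_cobounded]
  refine tendsto_atTop_mono' _ ?_ (tendsto_id.atTop_div_const (by positivity : 0 < 2 * a))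
  filter_upwards [eventually_ge_atTop 0] with ω hω
  exact (lam1_im_ge ha hb hω).trans ((le_abs_self _).trans (abs_im_le_norm _))

lemma tendsto_sq_ratio_cobounded {c : ℂ} (hc : c ≠ 0) :
    Tendsto (fun z => ((c - z) / (c * z - 1)) ^ 2) (cobounded ℂ) (𝓝 (c⁻¹ ^ 2)) := by
  have hcont : Tendsto (fun w => ((c * w - 1) / (c - w)) ^ 2) (𝓝 0) (𝓝 (c⁻¹ ^ 2)) := by
    have : ContinuousAt (fun w => ((c * w - 1) / (c - w)) ^ 2) 0 :=
      ((continuousAt_const.mul continuousAt_id).sub continuousAt_const).div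
        (continuousAt_const.sub continuousAt_id) (by simpa using hc) |>.pow 2
    simpa [div_pow] using this.tendsto
  refine (hcont.comp tendsto_inv₀_cobounded).congr' ?_
  filter_upwards [eventually_ne_cobounded 0] with z hz
  simp only [Function.comp_apply]
  field_simp

lemma tendsto_norm_rho0_atTop {a b α : ℝ} (ha : 0 < a) (hb : b ≤ 0) (hα : 1 + α ≠ 0) :
    Tendsto (fun ω : ℝ => ‖rho0 a b (I * ω) α‖) atTop (𝓝 (1 / (1 + α) ^ 2)) := by
  have hc : (1 + α : ℂ) ≠ 0 := by exact_mod_cast hα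
  have h := ((tendsto_sq_ratio_cobounded hc).comp (tendsto_lam1_cobounded ha hb)).norm
  convert h using 2 with ω
  · simp [rho0, add_comm]
  · rw [norm_pow, norm_inv, ← ofReal_one, ← ofReal_add, norm_real, Real.norm_eq_abs, inv_pow,
      sq_abs, one_div]

/-- With `α*₀(ε) = √2 ε^{1/4}` and `β = -α*₀`, the non-overlapping OWR convergence factor
equi-oscillates asymptotically between `ω = 0` and `ω = ∞` at the value `1 - 2√2 ε^{1/4}`:
`|ρ₀(0, α*₀, -α*₀)| = 1 - 2√2 ε^{1/4} + O(ε^{1/2})` and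
`lim_{ω → ∞} |ρ₀(iω, α*₀, -α*₀)| = 1/(1 + √2 ε^{1/4})² = 1 - 2√2 ε^{1/4} + O(ε^{1/2})`. -/
theorem rho0_equioscillation (a : ℝ) (ha : 0 < a) :
    (∃ C > (0 : ℝ), ∃ ε₀ > (0 : ℝ), ∀ ε : ℝ, 0 < ε → ε < ε₀ →
      |((Real.sqrt 2 * ε ^ ((1 : ℝ) / 4) + 1 - lam1Zero ε) /
          ((1 + Real.sqrt 2 * ε ^ ((1 : ℝ) / 4)) * lam1Zero ε - 1)) ^ 2
        - (1 - 2 * Real.sqrt 2 * ε ^ ((1 : ℝ) / 4))| ≤ C * ε ^ ((1 : ℝ) / 2)) ∧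
    (∀ ε : ℝ, 0 < ε →
      Filter.Tendsto
        (fun ω : ℝ => ‖
          (rho0 a (-(2 + ε) * a) (Complex.I * (ω : ℂ)) (Real.sqrt 2 * ε ^ ((1 : ℝ) / 4)))‖)
        Filter.atTop (nhds (1 / (1 + Real.sqrt 2 * ε ^ ((1 : ℝ) / 4)) ^ 2))) ∧
    (∃ C > (0 : ℝ), ∃ ε₀ > (0 : ℝ), ∀ ε : ℝ, 0 < ε → ε < ε₀ →
      |1 / (1 + Real.sqrt 2 * ε ^ ((1 : ℝ) / 4)) ^ 2
        - (1 - 2 * Real.sqrt 2 * ε ^ ((1 : ℝ) / 4))| ≤ C * ε ^ ((1 : ℝ) / 2)) := by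
  refine ⟨⟨50, by norm_num, 1 / 4, by norm_num, fun ε hε hε₀ =>
    abs_sq_ratio_lam1Zero_sub_le hε hε₀.le⟩, fun ε hε => ?_, ⟨6, by norm_num, 1, by norm_num,
    fun ε hε _ => ?_⟩⟩
  · exact tendsto_norm_rho0_atTop ha (by nlinarith) (by positivity)
  · have h := abs_one_div_one_add_sq_sub_le (by positivity : 0 ≤ √2 * ε ^ ((1 : ℝ) / 4))
    rw [sq_sqrt_two_mul_rpow_quarter hε.le] at h
    rw [mul_assoc 2, ← Real.sqrt_eq_rpow]
    linarith
end

section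
/- Let n ≥ 1 be an integer, a > 0, C_α > 0, C_ω > 0, and δ ∈ (0, 1/2]. For ε > 0 set b = −(2 + ε)a, α(ε) = C_α ε^δ, and ω̃(ε) = C_ω ε^δ. Then as ε → 0⁺, the modulus of the OWR convergence factor with overlap n at s = i ω̃(ε) and β = −α satisfies |ρ_n(i ω̃(ε), α(ε), −α(ε))| = 1 − (2√2 C_α √a/√C_ω) ε^{δ/2} − (n √2 √C_ω/√a) ε^{δ/2} + O(ε^δ). -/
/-- The OWR convergence factor with overlap `n`, parameters `α` and `β = -α`:
`ρ_n(s, α, -α) = ((α+1-λ₁(s))/((1+α)λ₁(s)-1))² (1/λ₁(s)²)ⁿ`. -/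
noncomputable def rhon (a b : ℝ) (n : ℕ) (s : ℂ) (α : ℝ) : ℂ :=
  (((α : ℂ) + 1 - lam1 a b s) / ((1 + (α : ℂ)) * lam1 a b s - 1)) ^ 2 *
    (1 / (lam1 a b s) ^ 2) ^ n

/-!
Put `t = ε^(δ/2)`, so that `ω̃ = Cω t²`, `α = Cα t²` and, since `δ ≤ 1/2`, `ε = O(t⁴)`.
With `ζ = εa + iCω t²` one has `λ₁ = 1 + (ζ + q)/(2a)`, where `q` is the principal root of
`ζ² + 4aζ = (Qt)² + O(t⁴)`, `Q = 2am(1 + i)`, `m = √(Cω/(2a))`. Because `Re q ≥ 0` and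
`Re(Qt) > 0`, `|q - Qt| ≤ |q² - (Qt)²| / Re(Qt) = O(t³)`, so `λ₁ = 1 + m(1 + i)t + O(t²)`.
Then `|λ₁|^(-2n) = 1 - 2nm t + O(t²)`, and the rational factor of `ρ_n` equals `-(1 - w)` with
`w = α(1 + λ₁)/((1 + α)λ₁ - 1) = (2Cα/(m(1 + i))) t + O(t²)`, so its squared modulus is
`1 - (2Cα/m) t + O(t²)`. Multiplying the two expansions gives the claim.
-/

open Asymptotics Filter Topology Complex

variable {ι : Type*} {l : Filter ι} {t : ι → ℝ}

lemma isBigO_pow_pow_of_tendsto_zero (ht : Tendsto t l (𝓝 0)) {m k : ℕ} (h : m ≤ k) :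
    (fun i => t i ^ k) =O[l] fun i => t i ^ m := by
  rcases h.eq_or_lt with rfl | h
  · exact isBigO_refl _ _
  · exact ((isLittleO_pow_pow h).comp_tendsto ht).isBigO

lemma tendsto_one_add_mul (ht : Tendsto t l (𝓝 0)) (A : ℝ) :
    Tendsto (fun i => 1 + A * t i) l (𝓝 1) := by
  simpa using (ht.const_mul A).const_add 1

lemma tendsto_one_of_isBigO_sub_one_add (ht : Tendsto t l (𝓝 0)) {f : ι → ℝ} {A : ℝ}
    (hf : (fun i => f i - (1 + A * t i)) =O[l] fun i => t i ^ 2) : Tendsto f l (𝓝 1) := by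
  have hr : Tendsto (fun i => f i - (1 + A * t i)) l (𝓝 0) :=
    hf.trans_tendsto (by simpa using ht.pow 2)
  simpa using hr.add (tendsto_one_add_mul ht A)

lemma isBigO_mul_sub_one_add (ht : Tendsto t l (𝓝 0)) {f g : ι → ℝ} {A B : ℝ}
    (hf : (fun i => f i - (1 + A * t i)) =O[l] fun i => t i ^ 2)
    (hg : (fun i => g i - (1 + B * t i)) =O[l] fun i => t i ^ 2) :
    (fun i => f i * g i - (1 + (A + B) * t i)) =O[l] fun i => t i ^ 2 := by
  have h1 : (fun i => (f i - (1 + A * t i)) * g i) =O[l] fun i => t i ^ 2 := by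
    simpa using hf.mul ((tendsto_one_of_isBigO_sub_one_add ht hg).isBigO_one ℝ)
  have h2 : (fun i => (1 + A * t i) * (g i - (1 + B * t i))) =O[l] fun i => t i ^ 2 := by
    simpa using ((tendsto_one_add_mul ht A).isBigO_one ℝ).mul hg
  have h3 : (fun i => A * B * t i ^ 2) =O[l] fun i => t i ^ 2 :=
    (isBigO_refl _ _).const_mul_left _
  exact ((h1.add h2).add h3).congr_left fun i => by ring

lemma isBigO_pow_sub_one_add (ht : Tendsto t l (𝓝 0)) {f : ι → ℝ} {A : ℝ}
    (hf : (fun i => f i - (1 + A * t i)) =O[l] fun i => t i ^ 2) (n : ℕ) :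
    (fun i => f i ^ n - (1 + n * A * t i)) =O[l] fun i => t i ^ 2 := by
  induction n with
  | zero => simpa using isBigO_zero _ _
  | succ n ih =>
    refine (isBigO_mul_sub_one_add ht ih hf).congr (fun i => ?_) fun _ => rfl
    push_cast
    ring

lemma isBigO_inv_sub_one_add (ht : Tendsto t l (𝓝 0)) {f : ι → ℝ} {A : ℝ}
    (hf : (fun i => f i - (1 + A * t i)) =O[l] fun i => t i ^ 2) :
    (fun i => (f i)⁻¹ - (1 + -A * t i)) =O[l] fun i => t i ^ 2 := by
  have hf1 := tendsto_one_of_isBigO_sub_one_add ht hf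
  have hinv : (fun i => (f i)⁻¹) =O[l] fun _ => (1 : ℝ) :=
    (by simpa using hf1.inv₀ one_ne_zero : Tendsto (fun i => (f i)⁻¹) l (𝓝 1)).isBigO_one ℝ
  -- `f⁻¹ - (1 - At) = (A²t² - r(1 - At)) f⁻¹` with `r = f - (1 + At)`
  have hnum : (fun i => A ^ 2 * t i ^ 2 - (f i - (1 + A * t i)) * (1 + -A * t i)) =O[l]
      fun i => t i ^ 2 :=
    ((isBigO_refl _ _).const_mul_left _).sub
      (by simpa using hf.mul ((tendsto_one_add_mul ht (-A)).isBigO_one ℝ))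
  have hprod : (fun i => (A ^ 2 * t i ^ 2 - (f i - (1 + A * t i)) * (1 + -A * t i)) * (f i)⁻¹)
      =O[l] fun i => t i ^ 2 := by
    simpa using hnum.mul hinv
  refine hprod.congr' ?_ EventuallyEq.rfl
  filter_upwards [hf1.eventually_ne one_ne_zero] with i hi
  field_simp
  ring

lemma isBigO_of_isBigO_sub_const_mul (ht : Tendsto t l (𝓝 0)) {w : ι → ℂ} {W : ℂ}
    (hw : (fun i => w i - W * t i) =O[l] fun i => t i ^ 2) : w =O[l] t := by
  have hlin : (fun i => W * (t i : ℂ)) =O[l] t :=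
    (isBigO_const_mul_self W _ _).trans (isBigO_of_le _ fun i => by simp)
  simpa using (hw.trans ((isBigO_pow_pow_of_tendsto_zero ht one_le_two).congr_right
    (by simp))).add hlin

lemma isBigO_norm_one_add_sq_sub (ht : Tendsto t l (𝓝 0)) {w : ι → ℂ} {W : ℂ}
    (hw : (fun i => w i - W * t i) =O[l] fun i => t i ^ 2) :
    (fun i => ‖1 + w i‖ ^ 2 - (1 + 2 * W.re * t i)) =O[l] fun i => t i ^ 2 := by
  have hre : (fun i => (w i - W * t i).re) =O[l] fun i => t i ^ 2 :=
    (isBigO_of_le _ fun i => by simpa using abs_re_le_norm (w i - W * t i)).trans hw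
  have hsq : (fun i => ‖w i‖ ^ 2) =O[l] fun i => t i ^ 2 :=
    (isBigO_of_isBigO_sub_const_mul ht hw).norm_left.pow 2
  refine ((hre.const_mul_left 2).add hsq).congr_left fun i => ?_
  rw [Complex.sq_norm, Complex.sq_norm, normSq_apply, normSq_apply]
  simp
  ring

lemma eventually_norm_mul_abs_le (ht : Tendsto t l (𝓝 0)) {u : ι → ℂ} {U : ℂ} (hU : U ≠ 0)
    (hu : (fun i => u i - U * t i) =O[l] fun i => t i ^ 2) :
    ∀ᶠ i in l, ‖U‖ * |t i| ≤ 2 * ‖u i‖ := by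
  have ho : (fun i => u i - U * t i) =o[l] t :=
    hu.trans_isLittleO (by
      simpa only [Function.comp_def, pow_one] using (isLittleO_pow_pow one_lt_two).comp_tendsto ht)
  filter_upwards [ho.bound (half_pos (norm_pos_iff.2 hU))] with i hi
  have h := norm_sub_norm_le (U * t i) (U * t i - u i)
  rw [norm_sub_rev] at hi
  simp only [sub_sub_cancel, norm_mul, norm_real, Real.norm_eq_abs] at h hi
  linarith

lemma isBigO_div_sub (ht : Tendsto t l (𝓝 0)) {u v : ι → ℂ} {U V : ℂ} (hU : U ≠ 0)
    (hu : (fun i => u i - U * t i) =O[l] fun i => t i ^ 2)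
    (hv : (fun i => v i - V * t i ^ 2) =O[l] fun i => t i ^ 3) :
    (fun i => v i / u i - V / U * t i) =O[l] fun i => t i ^ 2 := by
  have hlow := eventually_norm_mul_abs_le ht hU hu
  have hinv : (fun i => (u i)⁻¹) =O[l] fun i => (t i)⁻¹ := by
    refine IsBigO.inv_rev (IsBigO.of_bound (2 / ‖U‖) <| hlow.mono fun i hi => ?_) ?_
    · rw [Real.norm_eq_abs, div_mul_eq_mul_div, le_div_iff₀ (norm_pos_iff.2 hU)]
      linarith
    · filter_upwards [hu.eq_zero_imp] with i hi ht0
      simpa [ht0] using hi (by simp [ht0])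
  have hnum : (fun i => U * (v i - V * t i ^ 2) - V * t i * (u i - U * t i)) =O[l]
      fun i => t i ^ 3 := by
    have htu : (fun i => (t i : ℂ) * (u i - U * t i)) =O[l] fun i => t i * t i ^ 2 :=
      (isBigO_of_le _ fun i => by simp).mul hu
    exact (hv.const_mul_left U).sub
      ((htu.const_mul_left V).congr (fun i => by ring) fun i => by ring)
  have hquot : (fun i => U⁻¹ * ((U * (v i - V * t i ^ 2) - V * t i * (u i - U * t i)) *
      (u i)⁻¹)) =O[l] fun i => t i ^ 2 := by
    refine ((hnum.mul hinv).const_mul_left U⁻¹).congr_right fun i => ?_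
    rcases eq_or_ne (t i) 0 with h | h
    · simp [h]
    · field_simp
  refine hquot.congr' ?_ EventuallyEq.rfl
  filter_upwards [hlow] with i hlow
  rcases eq_or_ne (u i) 0 with hu0 | hu0
  · -- `u i = 0` forces `t i = 0`, and then both sides are `0` (as `x / 0 = 0`)
    have ht0 : ‖U‖ * |t i| = 0 := le_antisymm (by simpa [hu0] using hlow) (by positivity)
    simp [hu0, by simpa [hU] using ht0]
  · field_simp
    ring

lemma norm_sub_mul_re_le_norm_sq_sub_sq {q p : ℂ} (hq : 0 ≤ q.re) :
    ‖q - p‖ * p.re ≤ ‖q ^ 2 - p ^ 2‖ := by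
  calc ‖q - p‖ * p.re ≤ ‖q - p‖ * ‖q + p‖ := by
        gcongr
        exact (le_add_of_nonneg_left hq).trans_eq (add_re q p).symm |>.trans (re_le_norm _)
    _ = ‖q ^ 2 - p ^ 2‖ := by rw [← norm_mul]; ring_nf

lemma isBigO_sub_of_sq_sub_sq (ht : ∀ᶠ i in l, 0 < t i) {q : ι → ℂ} {Q : ℂ}
    (hq : ∀ i, 0 ≤ (q i).re) (hQ : 0 < Q.re)
    (hsq : (fun i => q i ^ 2 - (Q * t i) ^ 2) =O[l] fun i => t i ^ 4) :
    (fun i => q i - Q * t i) =O[l] fun i => t i ^ 3 := by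
  obtain ⟨c, hc⟩ := hsq.bound
  refine IsBigO.of_bound (c / Q.re) ?_
  filter_upwards [hc, ht] with i hci hti
  have key := norm_sub_mul_re_le_norm_sq_sub_sq (p := Q * t i) (hq i)
  rw [show (Q * t i).re = Q.re * t i by simp] at key
  rw [Real.norm_eq_abs, abs_of_pos (by positivity), div_mul_eq_mul_div, le_div_iff₀ hQ]
  rw [Real.norm_eq_abs, abs_of_pos (by positivity)] at hci
  nlinarith

lemma lam1_sub_one_eq {a : ℝ} (ha : a ≠ 0) (ε w : ℝ) :
    lam1 a (-(2 + ε) * a) (I * w) - 1 = (2 * a : ℂ)⁻¹ * (a * ε + I * w +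
      ((a * ε + I * w) ^ 2 + 4 * a * (a * ε + I * w)) ^ (2⁻¹ : ℂ)) := by
  have ha' : (a : ℂ) ≠ 0 := ofReal_ne_zero.2 ha
  rw [lam1, one_div, show ((-(2 + ε) * a : ℝ) - I * w : ℂ) ^ 2 - 4 * a ^ 2 =
    (a * ε + I * w) ^ 2 + 4 * a * (a * ε + I * w) by push_cast; ring]
  field_simp
  push_cast
  ring

lemma norm_rhon (a b : ℝ) (n : ℕ) (s : ℂ) (α : ℝ) :
    ‖rhon a b n s α‖ = ‖((α : ℂ) + 1 - lam1 a b s) / ((1 + (α : ℂ)) * lam1 a b s - 1)‖ ^ 2 *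
      ((‖lam1 a b s‖ ^ 2)⁻¹) ^ n := by
  simp [rhon, norm_pow, norm_inv]

lemma isBigO_lam1_sub {a Cω : ℝ} (ha : 0 < a) (hCω : 0 < Cω) {ε : ι → ℝ}
    (ht : Tendsto t l (𝓝[>] 0)) (hε : ε =O[l] fun i => t i ^ 4) :
    (fun i => lam1 a (-(2 + ε i) * a) (I * ((Cω * t i ^ 2 : ℝ) : ℂ))
      - (1 + (√(Cω / (2 * a)) : ℂ) * (1 + I) * t i)) =O[l] fun i => t i ^ 2 := by
  obtain ⟨ht0, htpos⟩ := tendsto_nhdsWithin_iff.1 ht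
  set m : ℝ := √(Cω / (2 * a)) with hm
  have ha' : (a : ℂ) ≠ 0 := ofReal_ne_zero.2 ha.ne'
  set Q : ℂ := 2 * a * (m * (1 + I)) with hQ
  have hQ2 : Q ^ 2 = 4 * a * Cω * I := by
    have hm2 : (m : ℂ) ^ 2 = Cω / (2 * a) := by
      rw [← ofReal_pow, hm, Real.sq_sqrt (by positivity)]; push_cast; rfl
    calc Q ^ 2 = 8 * a ^ 2 * (m : ℂ) ^ 2 * I := by rw [hQ]; ring_nf; rw [I_sq]; ring
      _ = 4 * a * Cω * I := by rw [hm2]; field_simp; ring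
  set ζ : ι → ℂ := fun i => a * ε i + I * ((Cω * t i ^ 2 : ℝ) : ℂ) with hζ
  set q : ι → ℂ := fun i => (ζ i ^ 2 + 4 * a * ζ i) ^ (2⁻¹ : ℂ) with hq
  have hlam : ∀ i, lam1 a (-(2 + ε i) * a) (I * ((Cω * t i ^ 2 : ℝ) : ℂ))
      - (1 + m * (1 + I) * t i) = (2 * a : ℂ)⁻¹ * (ζ i + (q i - Q * t i)) := fun i => by
    rw [← sub_sub, lam1_sub_one_eq ha.ne']
    simp only [hq, hζ, hQ]
    field_simp
    ring
  have hε2 : (fun i => (ε i : ℂ)) =O[l] fun i => t i ^ 2 :=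
    isBigO_ofReal_left.2 (hε.trans (isBigO_pow_pow_of_tendsto_zero ht0 (by norm_num)))
  have ht2 : (fun i => ((Cω * t i ^ 2 : ℝ) : ℂ)) =O[l] fun i => t i ^ 2 :=
    isBigO_ofReal_left.2 ((isBigO_refl _ _).const_mul_left Cω)
  have hζ2 : ζ =O[l] fun i => t i ^ 2 := (hε2.const_mul_left _).add (ht2.const_mul_left _)
  have hsq : (fun i => q i ^ 2 - (Q * t i) ^ 2) =O[l] fun i => t i ^ 4 := by
    have hζ4 : (fun i => ζ i ^ 2) =O[l] fun i => t i ^ 4 := by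
      simpa only [← pow_mul] using hζ2.pow 2
    refine (hζ4.add ((isBigO_ofReal_left.2 hε).const_mul_left (4 * a ^ 2 : ℂ))).congr_left
      fun i => ?_
    simp only [hq, cpow_ofNat_inv_pow, mul_pow, hQ2, hζ]
    push_cast
    ring
  have hqQ : (fun i => q i - Q * t i) =O[l] fun i => t i ^ 3 :=
    isBigO_sub_of_sq_sub_sq htpos (fun i => by simp only [hq]; rw [cpow_inv_two_re]; positivity)
      (by simp [hQ]; positivity) hsq
  exact ((hζ2.add (hqQ.trans (isBigO_pow_pow_of_tendsto_zero ht0 (by norm_num)))).const_mul_left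
    _).congr_left fun i => (hlam i).symm

lemma isBigO_norm_owr_factor_sq_sub (ht : Tendsto t l (𝓝[>] 0)) {lam : ι → ℂ} {M : ℂ}
    (hM : M ≠ 0) (hlam : (fun i => lam i - (1 + M * t i)) =O[l] fun i => t i ^ 2) (C : ℝ) :
    (fun i => ‖(((C * t i ^ 2 : ℝ) : ℂ) + 1 - lam i) /
        ((1 + ((C * t i ^ 2 : ℝ) : ℂ)) * lam i - 1)‖ ^ 2 - (1 + 2 * (-(2 * C / M)).re * t i))
      =O[l] fun i => t i ^ 2 := by
  obtain ⟨ht0, htpos⟩ := tendsto_nhdsWithin_iff.1 ht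
  set α : ι → ℂ := fun i => ((C * t i ^ 2 : ℝ) : ℂ) with hα
  set u : ι → ℂ := fun i => (1 + α i) * lam i - 1 with hu
  set v : ι → ℂ := fun i => α i * (1 + lam i) with hv
  have hα2 : α =O[l] fun i => t i ^ 2 :=
    isBigO_ofReal_left.2 ((isBigO_refl (fun i => t i ^ 2) l).const_mul_left C)
  have hαlam : (fun i => α i * (lam i - 1)) =O[l] fun i => t i ^ 3 := by
    simpa only [← pow_succ] using
      hα2.mul (isBigO_of_isBigO_sub_const_mul ht0 (hlam.congr_left fun i => by ring))
  have hu2 : (fun i => u i - M * t i) =O[l] fun i => t i ^ 2 :=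
    ((hlam.add (hαlam.trans (isBigO_pow_pow_of_tendsto_zero ht0 (by norm_num)))).add hα2).congr_left
      fun i => by simp only [hu]; ring
  have hv3 : (fun i => v i - (2 * C : ℂ) * t i ^ 2) =O[l] fun i => t i ^ 3 :=
    hαlam.congr_left fun i => by simp only [hv, hα]; push_cast; ring
  have hw : (fun i => -(v i / u i) - -(2 * C / M) * t i) =O[l] fun i => t i ^ 2 :=
    (isBigO_div_sub ht0 hM hu2 hv3).neg_left.congr_left fun i => by ring
  refine (isBigO_norm_one_add_sq_sub ht0 hw).congr' ?_ EventuallyEq.rfl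
  filter_upwards [eventually_norm_mul_abs_le ht0 hM hu2, htpos] with i hlow hti
  have hu0 : u i ≠ 0 := by
    intro h
    have : 0 < ‖M‖ * |t i| := mul_pos (norm_pos_iff.2 hM) (abs_pos.2 (ne_of_gt hti))
    rw [h, norm_zero] at hlow
    linarith
  have hdiv : (((C * t i ^ 2 : ℝ) : ℂ) + 1 - lam i) / ((1 + ((C * t i ^ 2 : ℝ) : ℂ)) * lam i - 1)
      = -(1 + -(v i / u i)) := by
    simp only [hu, hv, hα] at hu0 ⊢
    rw [neg_add, neg_neg, eq_comm, neg_add_eq_sub, div_sub_one hu0]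
    ring_nf
  rw [hdiv, norm_neg]

lemma isBigO_inv_norm_sq_pow_sub (ht : Tendsto t l (𝓝 0)) {lam : ι → ℂ} {M : ℂ}
    (hlam : (fun i => lam i - (1 + M * t i)) =O[l] fun i => t i ^ 2) (n : ℕ) :
    (fun i => ((‖lam i‖ ^ 2)⁻¹) ^ n - (1 + n * -(2 * M.re) * t i)) =O[l] fun i => t i ^ 2 := by
  have hsub : (fun i => (lam i - 1) - M * t i) =O[l] fun i => t i ^ 2 :=
    hlam.congr_left fun i => by ring
  have hnorm := isBigO_norm_one_add_sq_sub ht hsub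
  simp only [add_sub_cancel] at hnorm
  exact isBigO_pow_sub_one_add ht (isBigO_inv_sub_one_add ht hnorm) n

lemma re_ofReal_div_mul_one_add_I (c m : ℝ) : ((c : ℂ) / (m * (1 + I))).re = c / (2 * m) := by
  rcases eq_or_ne m 0 with rfl | hm
  · simp
  · simp [div_re, normSq_apply]
    field_simp
    ring

theorem isBigO_norm_rhon_sub {a Cω : ℝ} (ha : 0 < a) (hCω : 0 < Cω) (Cα : ℝ) (n : ℕ)
    {ε : ι → ℝ} (ht : Tendsto t l (𝓝[>] 0)) (hε : ε =O[l] fun i => t i ^ 4) :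
    (fun i => ‖rhon a (-(2 + ε i) * a) n (I * ((Cω * t i ^ 2 : ℝ) : ℂ)) (Cα * t i ^ 2)‖
      - (1 - (2 * √2 * Cα * √a / √Cω) * t i - (n * √2 * √Cω / √a) * t i))
      =O[l] fun i => t i ^ 2 := by
  have ht0 := (tendsto_nhdsWithin_iff.1 ht).1
  set m := √(Cω / (2 * a)) with hm
  have hm0 : 0 < m := Real.sqrt_pos.2 (by positivity)
  have hM : (m : ℂ) * (1 + I) ≠ 0 :=
    mul_ne_zero (ofReal_ne_zero.2 hm0.ne') (by simp [Complex.ext_iff])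
  have hlam := isBigO_lam1_sub ha hCω ht hε
  refine (isBigO_mul_sub_one_add ht0 (isBigO_norm_owr_factor_sq_sub ht hM hlam Cα)
    (isBigO_inv_norm_sq_pow_sub ht0 hlam n)).congr (fun i => ?_) fun _ => rfl
  have hm' : m = √Cω / (√2 * √a) := by
    rw [hm, Real.sqrt_div' _ (by positivity), Real.sqrt_mul zero_le_two]
  have h2 : √2 * √2 = 2 := Real.mul_self_sqrt zero_le_two
  have hA : 2 * (-(2 * (Cα : ℂ) / (m * (1 + I)))).re = -(2 * √2 * Cα * √a / √Cω) := by
    rw [neg_re, show 2 * (Cα : ℂ) = ((2 * Cα : ℝ) : ℂ) by push_cast; ring,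
      re_ofReal_div_mul_one_add_I, hm']
    field_simp
  have hB : (n : ℝ) * -(2 * ((m : ℂ) * (1 + I)).re) = -(n * √2 * √Cω / √a) := by
    simp only [mul_re, ofReal_re, ofReal_im, add_re, one_re, I_re, add_im, one_im, I_im]
    rw [hm']
    field_simp
    linear_combination (n * √Cω) * h2
  rw [norm_rhon]
  push_cast
  rw [hA, hB]
  ring

lemma tendsto_rpow_nhdsGT_zero {p : ℝ} (hp : 0 < p) :
    Tendsto (fun x : ℝ => x ^ p) (𝓝[>] 0) (𝓝[>] 0) := by
  refine tendsto_nhdsWithin_iff.2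
    ⟨?_, eventually_nhdsWithin_of_forall fun x hx => Real.rpow_pos_of_pos hx _⟩
  have h := (Real.continuousAt_rpow_const 0 p (Or.inr hp.le)).tendsto
  rw [Real.zero_rpow hp.ne'] at h
  exact h.mono_left nhdsWithin_le_nhds

lemma isBigO_id_rpow_nhdsGT_zero {p : ℝ} (hp : p ≤ 1) :
    (fun x : ℝ => x) =O[𝓝[>] 0] fun x => x ^ p := by
  refine IsBigO.of_bound' ?_
  filter_upwards [Ioo_mem_nhdsGT one_pos] with x ⟨hx0, hx1⟩
  rw [Real.norm_of_nonneg hx0.le, Real.norm_of_nonneg (Real.rpow_nonneg hx0.le p)]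
  simpa using Real.rpow_le_rpow_of_exponent_ge hx0 hx1.le hp

lemma exists_bound_of_isBigO_nhdsGT_zero {f g : ℝ → ℝ} (h : f =O[𝓝[>] 0] g) :
    ∃ C > (0 : ℝ), ∃ ε₀ > (0 : ℝ), ∀ ε : ℝ, 0 < ε → ε < ε₀ → |f ε| ≤ C * |g ε| := by
  obtain ⟨C, hC, hbound⟩ := h.exists_pos
  obtain ⟨ε₀, hε₀, hball⟩ := (nhdsGT_basis 0).eventually_iff.1 hbound.bound
  exact ⟨C, hC, ε₀, hε₀, fun ε hε hεε₀ => hball ⟨hε, hεε₀⟩⟩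

theorem rhon_at_interior_max_asymptotics_general (a Cα Cω δ : ℝ) (n : ℕ)
    (ha : 0 < a) (hCω : 0 < Cω) (hδ1 : 0 < δ) (hδ2 : δ ≤ 1 / 2) :
    ∃ C > (0 : ℝ), ∃ ε₀ > (0 : ℝ), ∀ ε : ℝ, 0 < ε → ε < ε₀ →
      |‖rhon a (-(2 + ε) * a) n (Complex.I * ((Cω * ε ^ δ : ℝ) : ℂ)) (Cα * ε ^ δ)‖
        - (1 - (2 * Real.sqrt 2 * Cα * Real.sqrt a / Real.sqrt Cω) * ε ^ (δ / 2)
             - ((n : ℝ) * Real.sqrt 2 * Real.sqrt Cω / Real.sqrt a) * ε ^ (δ / 2))|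
        ≤ C * ε ^ δ := by
  have hpow : ∀ {ε : ℝ} (k : ℕ), 0 < ε → (ε ^ (δ / 2)) ^ k = ε ^ (δ / 2 * k) := fun k hε => by
    rw [← Real.rpow_natCast, ← Real.rpow_mul hε.le]
  have hε : (fun ε : ℝ => ε) =O[𝓝[>] 0] fun ε => (ε ^ (δ / 2)) ^ 4 :=
    (isBigO_id_rpow_nhdsGT_zero (by push_cast; linarith)).congr'
      EventuallyEq.rfl (eventually_nhdsWithin_of_forall fun ε hε => (hpow 4 hε).symm)
  obtain ⟨C, hC, ε₀, hε₀, hbound⟩ := exists_bound_of_isBigO_nhdsGT_zero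
    (isBigO_norm_rhon_sub ha hCω Cα n (tendsto_rpow_nhdsGT_zero (half_pos hδ1)) hε)
  refine ⟨C, hC, ε₀, hε₀, fun ε hε hεε₀ => ?_⟩
  have hsq : (ε ^ (δ / 2)) ^ 2 = ε ^ δ := by rw [hpow 2 hε]; norm_num
  simpa only [hsq, abs_of_pos (Real.rpow_pos_of_pos hε δ)] using hbound ε hε hεε₀

/-- For an integer overlap `n ≥ 1`, `a > 0`, `C_α, C_ω > 0` and `δ ∈ (0, 1/2]`, with
`b = -(2 + ε)a`, `α(ε) = C_α ε^δ` and `ω̃(ε) = C_ω ε^δ`, as `ε → 0⁺` one has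
`|ρ_n(i ω̃, α, -α)| = 1 - (2√2 C_α √a/√C_ω) ε^{δ/2} - (n √2 √C_ω/√a) ε^{δ/2} + O(ε^δ)`. -/
theorem rhon_at_interior_max_asymptotics (a Cα Cω δ : ℝ) (n : ℕ) (hn : 1 ≤ n)
    (ha : 0 < a) (hCα : 0 < Cα) (hCω : 0 < Cω) (hδ1 : 0 < δ) (hδ2 : δ ≤ 1 / 2) :
    ∃ C > (0 : ℝ), ∃ ε₀ > (0 : ℝ), ∀ ε : ℝ, 0 < ε → ε < ε₀ →
      |‖rhon a (-(2 + ε) * a) n (Complex.I * ((Cω * ε ^ δ : ℝ) : ℂ)) (Cα * ε ^ δ)‖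
        - (1 - (2 * Real.sqrt 2 * Cα * Real.sqrt a / Real.sqrt Cω) * ε ^ (δ / 2)
             - ((n : ℝ) * Real.sqrt 2 * Real.sqrt Cω / Real.sqrt a) * ε ^ (δ / 2))|
        ≤ C * ε ^ δ :=
  rhon_at_interior_max_asymptotics_general a Cα Cω δ n ha hCω hδ1 hδ2
end
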